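/- arXiv:2303.10664 — 2 statements merged into one kernel-verified Lean document; each statement's English description precedes it below -/
import Mathlib

section
/- For every positive integer n, the sum over all partitions λ of n of (-1)^{ℓ(λ)} ∏_{i}(1 - t^{λ_i}) / z_λ equals t^n - t^{n-1}, where ℓ(λ) is the number of parts of λ. -/
/-!
For weights `a k = t ^ k - u ^ k`, the sum `∑_{λ ⊢ n} a_λ / z_λ` is the coefficient of `xⁿ` in
`exp (∑ₖ a k xᵏ / k) = (1 - u x) / (1 - t x)`. Rather than manipulating power series, we use the
recurrence `n S_n = ∑_{k=1}^n a k S_{n-k}` (the logarithmic derivative of the exponential), which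
comes from removing one part `k` from a partition: a part of multiplicity `m` accounts for the
factor `k m` of `z_λ`. The coefficients of `(1 - u x) / (1 - t x)` satisfy the same recurrence.
The theorem is the case `u = 1`, the sign `(-1)^{ℓ(λ)}` turning `∏ (1 - t^{λ_i})` into
`∏ (t^{λ_i} - 1)`.
-/

open MvPolynomial
open scoped Classical

noncomputable section

abbrev PosNat := {k : ℕ // 0 < k}

variable {R : Type} [CommRing R] [Algebra ℚ R]

/-- The power sum `p_k`, modeled as the variable `X k` of a polynomial ring. -/
def pp (k : ℕ) : MvPolynomial PosNat R := if h : 0 < k then X ⟨k, h⟩ else 1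

/-- `p_λ = p_{λ_1} p_{λ_2} ⋯` for a multiset of parts. -/
def pProd (μ : Multiset ℕ) : MvPolynomial PosNat R := (μ.map pp).prod

/-- `∏_i m_i(λ)!`. -/
def aut (μ : Multiset ℕ) : ℚ := ∏ i ∈ μ.toFinset, (Nat.factorial (μ.count i))

/-- `z_λ = ∏ i^{m_i(λ)} m_i(λ)!`. -/
def zed (μ : Multiset ℕ) : ℚ := (μ.map (fun i => (i : ℚ))).prod * aut μ

/-- partial derivative `∂/∂p_k`. -/
def pd (k : ℕ) : MvPolynomial PosNat R → MvPolynomial PosNat R :=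
  if h : 0 < k then fun f => pderiv ⟨k, h⟩ f else id

def derivList (l : List ℕ) (f : MvPolynomial PosNat R) : MvPolynomial PosNat R :=
  l.foldr (fun k g => pd k g) f

/-- the degree `-i` component of `exp(-∑_{n≥1} (∂/∂p_n) z^{-n})`. -/
def Dop (i : ℕ) (f : MvPolynomial PosNat R) : MvPolynomial PosNat R :=
  ∑ μ : i.Partition,
    algebraMap ℚ _ ((-1) ^ (Multiset.card μ.parts) / aut μ.parts) *
      derivList μ.parts.toList f

/-- weighted degree with `p_k` of weight `k`. -/
def wdeg (f : MvPolynomial PosNat R) : ℕ :=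
  f.weightedTotalDegree (fun k : PosNat => (k : ℕ))

/-- one-row Hall–Littlewood `q_m = ∑_{λ⊢m} p_λ / z_λ(t)`. -/
def qrow (t : R) (m : ℕ) : MvPolynomial PosNat R :=
  ∑ μ : m.Partition,
    algebraMap ℚ _ (zed μ.parts)⁻¹ * C ((μ.parts.map (fun k => 1 - t ^ k)).prod) *
      pProd μ.parts

/-- complete homogeneous `h_m = ∑_{λ⊢m} p_λ / z_λ`. -/
def hrow (m : ℕ) : MvPolynomial PosNat R :=
  ∑ μ : m.Partition, algebraMap ℚ _ (zed μ.parts)⁻¹ * pProd μ.parts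

/-- one-row Schur Q-function `Q_m = ∑_{λ⊢m, parts odd} 2^{ℓ(λ)} p_λ / z_λ`. -/
def qqrow (m : ℕ) : MvPolynomial PosNat R :=
  ∑ μ : m.Partition,
    if ∀ k ∈ μ.parts, Odd k then
      algebraMap ℚ _ (2 ^ (Multiset.card μ.parts) / zed μ.parts) * pProd μ.parts
    else 0

/-- the Hall–Littlewood vertex operator component `H_m`. -/
def Hop (t : R) (m : ℕ) (f : MvPolynomial PosNat R) : MvPolynomial PosNat R :=
  ∑ i ∈ Finset.range (wdeg f + 1), qrow t (m + i) * Dop i f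

/-- the Hall–Littlewood function `Q_μ(x;t) = H_{μ_1} ⋯ H_{μ_l}.1`. -/
def HLQ (t : R) (l : List ℕ) : MvPolynomial PosNat R := l.foldr (Hop t) 1

/-- the Schur Q-function vertex operator component `Q_m`. -/
def Qop (m : ℕ) (f : MvPolynomial PosNat R) : MvPolynomial PosNat R :=
  ∑ i ∈ Finset.range (wdeg f + 1), qqrow (m + i) * Dop i f

/-- the Schur Q-function `Q_ξ = Q_{ξ_1} ⋯ Q_{ξ_l}.1` for a strict partition `ξ`. -/
def SchurQ (l : List ℕ) : MvPolynomial PosNat R := l.foldr Qop 1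

def hInt (m : ℤ) : MvPolynomial PosNat R := if 0 ≤ m then hrow m.toNat else 0

/-- the Schur function via the Jacobi–Trudi determinant. -/
def schur (l : List ℕ) : MvPolynomial PosNat R :=
  Matrix.det (Matrix.of fun i j : Fin l.length => hInt ((l.get i : ℤ) - (i : ℤ) + (j : ℤ)))

/-- `b_μ(t) = ∏_i ∏_{j=1}^{m_i(μ)} (1 - t^j)`, so that `Q_μ(x;t) = b_μ(t) P_μ(x;t)`. -/
def bPol (t : R) (μ : Multiset ℕ) : R :=
  ∏ i ∈ μ.toFinset, ∏ j ∈ Finset.Icc 1 (μ.count i), (1 - t ^ j)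

/-- the decreasing list of parts of a partition. -/
def ofPart {n : ℕ} (μ : n.Partition) : List ℕ := (μ.parts.sort (· ≤ ·)).reverse

def toPart {n : ℕ} (l : List ℕ) (hpos : ∀ x ∈ l, 0 < x) (hsum : l.sum = n) : n.Partition :=
  ⟨(l : Multiset ℕ), fun {i} hi => hpos i hi, by simpa using hsum⟩

/-- `n(μ) = ∑ (i-1) μ_i` (0-indexed). -/
def nstat (l : List ℕ) : ℕ := ∑ i ∈ Finset.range l.length, i * l.getD i 0

/-- dominance order: `a ≥ b`. -/
def Dom (a b : List ℕ) : Prop := a.sum = b.sum ∧ ∀ k, (b.take k).sum ≤ (a.take k).sum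

abbrev F := RatFunc ℚ

def tF : F := RatFunc.X

/-- Hall–Littlewood `P_μ(x;t) = b_μ(t)⁻¹ Q_μ(x;t)` over `ℚ(t)`. -/
def Pfun {n : ℕ} (μ : n.Partition) : MvPolynomial PosNat F :=
  C (bPol tF μ.parts)⁻¹ * HLQ tF (ofPart μ)


open Finset

lemma aut_cons (a : ℕ) (s : Multiset ℕ) : aut (a ::ₘ s) = (s.count a + 1) * aut s := by
  have hs : aut s = ∏ i ∈ insert a s.toFinset, ((s.count i).factorial : ℚ) := by
    refine prod_subset (subset_insert a _) fun i _ hi => ?_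
    rw [Multiset.count_eq_zero.mpr (by simpa using hi)]
    simp
  have ha := mem_insert_self a s.toFinset
  rw [aut, hs, Multiset.toFinset_cons, ← mul_prod_erase _ _ ha, ← mul_prod_erase _ _ ha,
    Multiset.count_cons_self, Nat.factorial_succ,
    prod_congr rfl fun i hi => by rw [Multiset.count_cons_of_ne (ne_of_mem_erase hi)]]
  push_cast
  ring

/-- The coercion in `zed` elaborates through the monad structure of `Multiset`, as
`s >>= pure ∘ Nat.cast`. -/
lemma zed_eq_prod_mul_aut (s : Multiset ℕ) : zed s = (s.map Nat.cast).prod * aut s := by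
  rw [zed, Multiset.map_id']
  congr 2
  exact Multiset.bind_singleton _ _

lemma zed_cons (a : ℕ) (s : Multiset ℕ) : zed (a ::ₘ s) = a * (s.count a + 1) * zed s := by
  rw [zed_eq_prod_mul_aut, zed_eq_prod_mul_aut, aut_cons, Multiset.map_cons, Multiset.prod_cons]
  ring

lemma zed_zero : zed 0 = 1 := by
  simp [zed_eq_prod_mul_aut, aut]

namespace Nat.Partition

def equivOfMemParts {n k : ℕ} (hk : 0 < k) (hkn : k ≤ n) :
    {μ : n.Partition // k ∈ μ.parts} ≃ (n - k).Partition where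
  toFun μ := ⟨μ.1.parts.erase k, fun hi => μ.1.parts_pos (Multiset.mem_of_mem_erase hi), by
    have h := μ.1.parts_sum
    rw [← Multiset.cons_erase μ.2, Multiset.sum_cons] at h
    omega⟩
  invFun ν := ⟨⟨k ::ₘ ν.parts, fun hi => (Multiset.mem_cons.mp hi).elim (· ▸ hk) ν.parts_pos, by
    rw [Multiset.sum_cons, ν.parts_sum]
    omega⟩, Multiset.mem_cons_self k _⟩
  left_inv μ := Subtype.ext (Nat.Partition.ext (Multiset.cons_erase μ.2))
  right_inv ν := Nat.Partition.ext (Multiset.erase_cons_head k ν.parts)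

lemma sum_sum_erase {M : Type*} [AddCommMonoid M] (n : ℕ) (g : ℕ → Multiset ℕ → M) :
    ∑ μ : n.Partition, ∑ k ∈ μ.parts.toFinset, g k (μ.parts.erase k)
      = ∑ k ∈ Icc 1 n, ∑ ν : (n - k).Partition, g k ν.parts := by
  rw [sum_comm' (t' := Icc 1 n) (s' := fun k => {μ | k ∈ μ.parts})]
  · refine sum_congr rfl fun k hk => ?_
    obtain ⟨hk, hkn⟩ := mem_Icc.mp hk
    rw [sum_subtype (p := fun μ : n.Partition => k ∈ μ.parts) _ fun μ => by simp]
    exact (equivOfMemParts hk hkn).sum_comp fun ν => g k ν.parts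
  · intro μ k
    simp only [Multiset.mem_toFinset, mem_univ, mem_filter, true_and, mem_Icc]
    exact ⟨fun hk => ⟨hk, μ.parts_pos hk, μ.parts_sum ▸ Multiset.le_sum_of_mem hk⟩, And.left⟩

end Nat.Partition

lemma Finset.Nat.sum_Icc_eq_sum_antidiagonal {M : Type*} [AddCommMonoid M] (f : ℕ → ℕ → M)
    (hf : ∀ j, f 0 j = 0) (n : ℕ) :
    ∑ k ∈ Icc 1 n, f k (n - k) = ∑ p ∈ antidiagonal n, f p.1 p.2 := by
  rw [sum_antidiagonal_eq_sum_range_succ f, range_eq_Ico, sum_eq_sum_Ico_succ_bot n.succ_pos, hf,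
    zero_add, zero_add, Nat.succ_eq_add_one, Ico_add_one_right_eq_Icc]

section PartitionSum

variable {K : Type*} [Field K]

def partitionWeight (a : ℕ → K) (s : Multiset ℕ) : K := (s.map a).prod / (zed s : K)

/-- The coefficient of `xⁿ` in `exp (∑ₖ a k xᵏ / k)`. -/
def partitionSum (a : ℕ → K) (n : ℕ) : K := ∑ μ : n.Partition, partitionWeight a μ.parts

lemma partitionSum_zero (a : ℕ → K) : partitionSum a 0 = 1 := by
  simp [partitionSum, partitionWeight, zed_zero]

/-- The coefficients of the power series `(1 - u x) / (1 - t x)`. -/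
def linFracCoeff (t u : K) : ℕ → K
  | 0 => 1
  | m + 1 => t ^ (m + 1) - u * t ^ m

lemma linFracCoeff_succ (t u : K) (m : ℕ) :
    linFracCoeff t u (m + 1) = t * linFracCoeff t u m - if m = 0 then u else 0 := by
  cases m <;> simp [linFracCoeff]; ring

lemma sum_antidiagonal_pow_sub_pow_mul_linFracCoeff (t u : K) (n : ℕ) :
    ∑ p ∈ antidiagonal n, (t ^ p.1 - u ^ p.1) * linFracCoeff t u p.2
      = n * linFracCoeff t u n := by
  induction n with
  | zero => simp
  | succ n ih =>
    have hcorr : ∑ p ∈ antidiagonal n, (t ^ p.1 - u ^ p.1) * (if p.2 = 0 then u else 0)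
        = (t ^ n - u ^ n) * u := by
      rw [sum_eq_single_of_mem (n, 0) (by simp) fun p hp hne => ?_]
      · simp
      · rw [if_neg, mul_zero]
        rintro h0
        exact hne (Prod.ext (by simpa [h0] using mem_antidiagonal.mp hp) h0)
    calc ∑ p ∈ antidiagonal (n + 1), (t ^ p.1 - u ^ p.1) * linFracCoeff t u p.2
        = (t ^ (n + 1) - u ^ (n + 1))
            + ∑ p ∈ antidiagonal n, (t ^ p.1 - u ^ p.1) * linFracCoeff t u (p.2 + 1) := by
          rw [Nat.sum_antidiagonal_succ', linFracCoeff, mul_one]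
      _ = (t ^ (n + 1) - u ^ (n + 1)) + (t * (n * linFracCoeff t u n) - (t ^ n - u ^ n) * u) := by
          rw [← ih, ← hcorr, mul_sum, ← sum_sub_distrib]
          congr 1
          refine sum_congr rfl fun p _ => ?_
          rw [linFracCoeff_succ]
          ring
      _ = (n + 1 : ℕ) * linFracCoeff t u (n + 1) := by
        rcases n with _ | m
        · simp [linFracCoeff]
        · simp only [linFracCoeff]
          push_cast
          ring

variable [CharZero K]

lemma partitionWeight_cons (a : ℕ → K) {k : ℕ} (hk : k ≠ 0) (s : Multiset ℕ) :
    (k * (s.count k + 1) : K) * partitionWeight a (k ::ₘ s) = a k * partitionWeight a s := by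
  have hc : (k * (s.count k + 1) : K) ≠ 0 :=
    mul_ne_zero (Nat.cast_ne_zero.mpr hk) (Nat.cast_add_one_ne_zero _)
  rw [partitionWeight, partitionWeight, Multiset.map_cons, Multiset.prod_cons, zed_cons]
  push_cast
  rw [mul_div_assoc', mul_div_mul_left _ _ hc, mul_div_assoc]

lemma sum_mul_partitionWeight (a : ℕ → K) {s : Multiset ℕ} (hs : 0 ∉ s) :
    (s.sum : K) * partitionWeight a s = ∑ k ∈ s.toFinset, a k * partitionWeight a (s.erase k) := by
  rw [sum_multiset_count, Nat.cast_sum, sum_mul]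
  refine sum_congr rfl fun k hk => ?_
  have hk : k ∈ s := Multiset.mem_toFinset.mp hk
  have hcount : s.count k = (s.erase k).count k + 1 := by
    rw [Multiset.count_erase_self, Nat.sub_add_cancel (Multiset.count_pos.mpr hk)]
  rw [← partitionWeight_cons a (ne_of_mem_of_not_mem hk hs), Multiset.cons_erase hk, hcount,
    smul_eq_mul]
  push_cast
  ring

lemma mul_partitionSum (a : ℕ → K) (n : ℕ) :
    (n : K) * partitionSum a n = ∑ k ∈ Icc 1 n, a k * partitionSum a (n - k) := by
  calc (n : K) * partitionSum a n
      = ∑ μ : n.Partition, (μ.parts.sum : K) * partitionWeight a μ.parts := by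
        simp only [partitionSum, mul_sum, Nat.Partition.parts_sum]
    _ = ∑ μ : n.Partition, ∑ k ∈ μ.parts.toFinset, a k * partitionWeight a (μ.parts.erase k) :=
        sum_congr rfl fun μ _ => sum_mul_partitionWeight a fun h => (μ.parts_pos h).ne rfl
    _ = _ := by
        rw [Nat.Partition.sum_sum_erase n fun k s => a k * partitionWeight a s]
        simp only [partitionSum, mul_sum]

theorem partitionSum_pow_sub_pow (t u : K) (n : ℕ) :
    partitionSum (fun k => t ^ k - u ^ k) n = linFracCoeff t u n := by
  induction n using Nat.strong_induction_on with
  | _ n ih =>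
    rcases n.eq_zero_or_pos with rfl | hn
    · exact partitionSum_zero _
    have hrec := mul_partitionSum (fun k => t ^ k - u ^ k) n
    rw [sum_congr rfl fun k hk => by rw [ih (n - k) (by grind)],
      Nat.sum_Icc_eq_sum_antidiagonal (fun i j => (t ^ i - u ^ i) * linFracCoeff t u j)
        (by simp), sum_antidiagonal_pow_sub_pow_mul_linFracCoeff] at hrec
    exact mul_left_cancel₀ (Nat.cast_ne_zero.mpr hn.ne') hrec

end PartitionSum

/-- `∑_{λ⊢n} (-1)^{ℓ(λ)}/z_λ(t) = t^n - t^{n-1}` in `ℚ(t)` for `n ≥ 1`. -/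
theorem spin_sum_inv_zt_signed (n : ℕ) (hn : 0 < n) :
    ∑ μ : n.Partition,
      ((-1 : F) ^ (Multiset.card μ.parts) *
        ((μ.parts.map (fun i => 1 - tF ^ i)).prod / algebraMap ℚ F (zed μ.parts)))
      = tF ^ n - tF ^ (n - 1) := by
  obtain ⟨m, rfl⟩ : ∃ m, n = m + 1 := ⟨n - 1, by omega⟩
  have h := partitionSum_pow_sub_pow tF 1 (m + 1)
  simp only [partitionSum, partitionWeight, linFracCoeff, one_pow, one_mul] at h
  rw [Nat.add_sub_cancel, ← h]
  refine sum_congr rfl fun μ _ => ?_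
  rw [eq_ratCast, mul_div_assoc', ← Multiset.card_map (fun i => 1 - tF ^ i),
    ← Multiset.prod_map_neg, Multiset.map_map]
  congr 2
  exact Multiset.map_congr rfl fun i _ => neg_sub _ _
end
end

section
/- Let λ = (λ₁, λ₂, 2^{m₂}, 1^{m₁}) be a double-hook partition that is not a hook (λ₂ ≥ 2, m₂ ≥ 0). Then N^{(s)}(λ) = 0 if 0 ≤ s ≤ m₂ - 1 or s ≥ m₁ + m₂ + 2; N^{(s)}(λ) = 1 if s = m₂ or s = m₁ + m₂ + 1; and N^{(s)}(λ) = 2 if m₂ + 1 ≤ s ≤ m₁ + m₂. -/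
open MvPolynomial
open scoped Classical

noncomputable section

variable {R : Type} [CommRing R] [Algebra ℚ R]

def IsHookL (l : List ℕ) : Prop := l ≠ [] ∧ ∀ x ∈ l.tail, x = 1

def VStrip (ρ ν : List ℕ) : Prop :=
  ∀ i, ρ.getD i 0 ≤ ν.getD i 0 ∧ ν.getD i 0 ≤ ρ.getD i 0 + 1

def Ncount (s : ℤ) (ν : List ℕ) : ℕ :=
  Nat.card {ρ : List ℕ // ρ.Pairwise (· ≥ ·) ∧ (∀ x ∈ ρ, 0 < x) ∧ IsHookL ρ ∧
    (ρ.sum : ℤ) + s = (ν.sum : ℤ) ∧ VStrip ρ ν}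

/-
If `λ^{[1]}/ρ` is a vertical strip with `ρ = (a, 1^b)` a hook, comparing first rows forces
`a ∈ {λ₂, λ₂ - 1}`, and comparing the rows of lengths `2` and `1` forces `m₂ ≤ b ≤ m₂ + m₁`.
Writing `a = λ₂ - δ` with `δ ∈ {0, 1}`, the size condition fixes `b = 2m₂ + m₁ + δ - s`, so
`N^{(s)}(λ)` counts the `δ ∈ {0, 1}` with `m₂ + δ ≤ s ≤ m₁ + m₂ + δ`; as `λ₂ ≥ 2`, distinct
`δ` give distinct hooks with positive parts.
-/

abbrev doubleHookTail (lam2 m2 m1 : ℕ) : List ℕ :=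
  lam2 :: (List.replicate m2 2 ++ List.replicate m1 1)

lemma getD_replicate_zero (n i x : ℕ) :
    (List.replicate n x).getD i 0 = if i < n then x else 0 := by
  rw [List.getD_eq_getElem?_getD, List.getElem?_replicate]
  split_ifs <;> rfl

lemma getD_hook (a b i : ℕ) :
    (a :: List.replicate b 1).getD i 0 = if i = 0 then a else if i ≤ b then 1 else 0 := by
  cases i with
  | zero => rfl
  | succ j =>
    rw [List.getD_cons_succ, getD_replicate_zero, if_neg j.succ_ne_zero]
    split_ifs <;> omega

lemma getD_doubleHookTail (lam2 m2 m1 i : ℕ) :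
    (doubleHookTail lam2 m2 m1).getD i 0 =
      if i = 0 then lam2 else if i ≤ m2 then 2 else if i ≤ m2 + m1 then 1 else 0 := by
  cases i with
  | zero => rfl
  | succ j =>
    rw [List.getD_cons_succ, if_neg j.succ_ne_zero]
    rcases lt_or_ge j m2 with h | h
    · rw [List.getD_append _ _ _ _ (by simpa using h), getD_replicate_zero]
      split_ifs <;> omega
    · rw [List.getD_append_right _ _ _ _ (by simpa using h), getD_replicate_zero,
        List.length_replicate]
      split_ifs <;> omega

lemma isHookL_iff {ρ : List ℕ} : IsHookL ρ ↔ ∃ a b, ρ = a :: List.replicate b 1 := by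
  constructor
  · rintro ⟨hne, htail⟩
    obtain ⟨a, l, rfl⟩ := List.exists_cons_of_ne_nil hne
    exact ⟨a, l.length, congrArg (a :: ·) (List.eq_replicate_length.mpr htail)⟩
  · rintro ⟨a, b, rfl⟩
    exact ⟨List.cons_ne_nil _ _, fun x hx => List.eq_of_mem_replicate hx⟩

lemma vStrip_hook_doubleHookTail_iff (a b lam2 m2 m1 : ℕ) :
    VStrip (a :: List.replicate b 1) (doubleHookTail lam2 m2 m1) ↔
      (a = lam2 ∨ a + 1 = lam2) ∧ m2 ≤ b ∧ b ≤ m2 + m1 := by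
  simp only [VStrip, getD_hook, getD_doubleHookTail]
  constructor
  · intro h
    -- rows `0`, `m₂` and `m₂ + m₁ + 1` of `λ^{[1]}` already decide the strip condition
    have h0 := h 0
    have hm2 := (h m2).2
    have hend := (h (m2 + m1 + 1)).1
    simp only [Nat.add_one_ne_zero, if_false] at hend
    split_ifs at h0 hm2 hend <;> omega
  · rintro ⟨ha, hb⟩ i
    constructor <;> split_ifs <;> omega

lemma sum_hook (a b : ℕ) : (a :: List.replicate b 1).sum = a + b := by
  simp

lemma sum_doubleHookTail (lam2 m2 m1 : ℕ) :
    (doubleHookTail lam2 m2 m1).sum = lam2 + 2 * m2 + m1 := by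
  simp only [List.sum_cons, List.sum_append, List.sum_replicate, smul_eq_mul]
  ring

lemma pairwise_ge_hook {a : ℕ} (ha : 1 ≤ a) (b : ℕ) :
    (a :: List.replicate b 1).Pairwise (· ≥ ·) :=
  List.pairwise_cons.mpr
    ⟨fun _ hx => (List.eq_of_mem_replicate hx).trans_le ha, List.pairwise_replicate_of_refl⟩

lemma pos_of_mem_hook {a : ℕ} (ha : 0 < a) (b : ℕ) : ∀ x ∈ a :: List.replicate b 1, 0 < x :=
  List.forall_mem_cons.mpr ⟨ha, fun _ hx => (List.eq_of_mem_replicate hx).trans_gt one_pos⟩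

lemma card_subtype_fin_two (P : Fin 2 → Prop) :
    Nat.card {δ // P δ} = (if P 0 then 1 else 0) + (if P 1 then 1 else 0) := by
  rw [Nat.card_eq_fintype_card, Fintype.card_subtype, Finset.card_filter, Fin.sum_univ_two]

lemma Ncount_doubleHookTail_eq_card (lam2 m2 m1 s : ℕ) (h2 : 2 ≤ lam2) :
    Ncount (s : ℤ) (doubleHookTail lam2 m2 m1) =
      Nat.card {δ : Fin 2 // m2 + δ ≤ s ∧ s ≤ m1 + m2 + δ} := by
  symm
  refine Nat.card_eq_of_bijective
    (fun δ => ⟨(lam2 - δ.1) :: List.replicate (2 * m2 + m1 + δ.1 - s) 1, ?_⟩) ⟨?_, ?_⟩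
  · have hδ := δ.2
    have hδ2 := δ.1.isLt
    refine ⟨pairwise_ge_hook (by omega) _, pos_of_mem_hook (by omega) _,
      isHookL_iff.mpr ⟨_, _, rfl⟩, ?_, (vStrip_hook_doubleHookTail_iff ..).mpr (by omega)⟩
    rw [sum_hook, sum_doubleHookTail]
    push_cast
    omega
  · rintro ⟨δ, hδ⟩ ⟨δ', hδ'⟩ h
    have hhead := (List.cons.inj (congrArg Subtype.val h)).1
    have := δ.isLt
    have := δ'.isLt
    exact Subtype.ext (Fin.ext (by omega))
  · rintro ⟨ρ, -, -, hhook, hsum, hstrip⟩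
    obtain ⟨a, b, rfl⟩ := isHookL_iff.mp hhook
    obtain ⟨ha, hb⟩ := (vStrip_hook_doubleHookTail_iff ..).mp hstrip
    rw [sum_hook, sum_doubleHookTail] at hsum
    push_cast at hsum
    refine ⟨⟨⟨lam2 - a, by omega⟩, by simp only; omega⟩, Subtype.ext ?_⟩
    simp only [List.cons.injEq, List.replicate_left_inj]
    omega

theorem Ncount_double_hook_general (lam2 m2 m1 : ℕ) (h2 : 2 ≤ lam2)
    (s : ℕ) :
    (s + 1 ≤ m2 ∨ m1 + m2 + 2 ≤ s →
      Ncount (s : ℤ) (lam2 :: (List.replicate m2 2 ++ List.replicate m1 1)) = 0)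
    ∧ ((s = m2 ∨ s = m1 + m2 + 1) →
      Ncount (s : ℤ) (lam2 :: (List.replicate m2 2 ++ List.replicate m1 1)) = 1)
    ∧ (m2 + 1 ≤ s ∧ s ≤ m1 + m2 →
      Ncount (s : ℤ) (lam2 :: (List.replicate m2 2 ++ List.replicate m1 1)) = 2) := by
  rw [Ncount_doubleHookTail_eq_card lam2 m2 m1 s h2, card_subtype_fin_two]
  simp only [Fin.val_zero, Fin.val_one]
  refine ⟨fun hs => ?_, fun hs => ?_, fun hs => ?_⟩ <;> split_ifs <;> omega

/-- for the double hook `λ = (λ₁, λ₂, 2^{m₂}, 1^{m₁})` with `λ₂ ≥ 2`,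
`N^{(s)}(λ)` is `0` for `s ≤ m₂-1` or `s ≥ m₁+m₂+2`, `1` for `s = m₂` or `s = m₁+m₂+1`,
and `2` for `m₂+1 ≤ s ≤ m₁+m₂`. -/
theorem Ncount_double_hook (lam1 lam2 m2 m1 : ℕ) (h12 : lam2 ≤ lam1) (h2 : 2 ≤ lam2)
    (s : ℕ) (hs : s ≤ lam2 + 2 * m2 + m1) :
    (s + 1 ≤ m2 ∨ m1 + m2 + 2 ≤ s →
      Ncount (s : ℤ) (lam2 :: (List.replicate m2 2 ++ List.replicate m1 1)) = 0)
    ∧ ((s = m2 ∨ s = m1 + m2 + 1) →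
      Ncount (s : ℤ) (lam2 :: (List.replicate m2 2 ++ List.replicate m1 1)) = 1)
    ∧ (m2 + 1 ≤ s ∧ s ≤ m1 + m2 →
      Ncount (s : ℤ) (lam2 :: (List.replicate m2 2 ++ List.replicate m1 1)) = 2) :=
  Ncount_double_hook_general lam2 m2 m1 h2 s
end
end
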